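/- For every skip-free GKAT expression e, the pruning transformation satisfies e ≡ ⌊e⌋ using the full axioms (including x·0 = 0): ⌊0⌋ = 0, ⌊p⌋ = p, ⌊e₁ +_b e₂⌋ = ⌊e₁⌋ +_b ⌊e₂⌋, ⌊e₁·e₂⌋ = 0 if e₂ is dead else ⌊e₁⌋·⌊e₂⌋, and ⌊e₁^(b)e₂⌋ = 0 if b̄e₂ is dead else ⌊e₁⌋^(b)⌊e₂⌋. -/

import Mathlib

variable {At : Type} {Act : Type} {X : Type} {Y : Type} {Z : Type}

/-- Skip-free GKAT expressions; tests are represented as Boolean predicates on atoms. -/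
inductive GExp (At Act : Type) : Type
  | zero : GExp At Act
  | act : Act → GExp At Act
  | add : (At → Bool) → GExp At Act → GExp At Act → GExp At Act
  | seq : GExp At Act → GExp At Act → GExp At Act
  | loop : (At → Bool) → GExp At Act → GExp At Act → GExp At Act

/-- The Brzozowski-style small-step semantics (derivative) of skip-free GKAT expressions.
`none` is the failure output ⊥, `some (p, none)` is acceptance with action `p`,
and `some (p, some e')` is a transition to `e'` with action `p`. -/
def gderiv : GExp At Act → At → Option (Act × Option (GExp At Act))
  | .zero, _ => none
  | .act p, _ => some (p, none)
  | .add b e f, α => if b α then gderiv e α else gderiv f α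
  | .seq e f, α =>
      match gderiv e α with
      | none => none
      | some (p, none) => some (p, some f)
      | some (p, some e') => some (p, some (.seq e' f))
  | .loop b e f, α =>
      if b α then
        match gderiv e α with
        | none => none
        | some (p, none) => some (p, some (.loop b e f))
        | some (p, some e') => some (p, some (.seq e' (.loop b e f)))
      else gderiv f α

/-- A skip-free automaton structure on `X`. -/
abbrev SFA (At Act X : Type) := X → At → Option (Act × Option X)

/-- Acceptance of a guarded trace (a nonempty list of atom/action pairs) from a state. -/
inductive Accepts (h : SFA At Act X) : X → List (At × Act) → Prop
  | last {x α p} : h x α = some (p, none) → Accepts h x [(α, p)]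
  | step {x α p x' w} : h x α = some (p, some x') → Accepts h x' w →
      Accepts h x ((α, p) :: w)

/-- The language of guarded traces accepted by a state of a skip-free automaton. -/
def Lang (h : SFA At Act X) (x : X) : Set (List (At × Act)) := {w | Accepts h x w}

/-- Bisimulations between skip-free automata. -/
def IsSFBisim (h : SFA At Act X) (k : SFA At Act Y) (R : X → Y → Prop) : Prop :=
  ∀ ⦃x y⦄, R x y → ∀ α : At,
    (h x α = none ↔ k y α = none) ∧
    (∀ p : Act, h x α = some (p, none) ↔ k y α = some (p, none)) ∧
    (∀ (p : Act) (x' : X), h x α = some (p, some x') →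
      ∃ y' : Y, k y α = some (p, some y') ∧ R x' y')

/-- Bisimilarity of states of skip-free automata. -/
def SFBisimilar (h : SFA At Act X) (k : SFA At Act Y) (x : X) (y : Y) : Prop :=
  ∃ R, IsSFBisim h k R ∧ R x y

/-- A state of a skip-free automaton is dead if it belongs to some set of states closed
under transitions and containing no accepting transitions (the largest such set). -/
def Dead (h : SFA At Act X) (x : X) : Prop :=
  ∃ D : Set X, x ∈ D ∧ ∀ y ∈ D, ∀ α : At,
    h y α = none ∨ ∃ (p : Act) (y' : X), h y α = some (p, some y') ∧ y' ∈ D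

/-- Provable equality `≡` of skip-free GKAT expressions (full axioms, including `x·0 = 0`). -/
inductive GEq : GExp At Act → GExp At Act → Prop
  | refl (e) : GEq e e
  | symm {e f} : GEq e f → GEq f e
  | trans {e f g} : GEq e f → GEq f g → GEq e g
  | congAdd (b) {e e' f f'} : GEq e e' → GEq f f' → GEq (.add b e f) (.add b e' f')
  | congSeq {e e' f f'} : GEq e e' → GEq f f' → GEq (.seq e f) (.seq e' f')
  | congLoop (b) {e e' f f'} : GEq e e' → GEq f f' → GEq (.loop b e f) (.loop b e' f')
  | G0 (e f) : GEq (.add (fun _ => true) e f) e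
  | G1 (b e) : GEq (.add b e e) e
  | G2 (b e f) : GEq (.add b e f) (.add (fun α => !b α) f e)
  | G3 (b c e f g) :
      GEq (.add b e (.add c f g)) (.add (fun α => b α || c α) (.add b e f) g)
  | G6 (e) : GEq (.seq .zero e) .zero
  | dagger (e) : GEq (.seq e .zero) .zero
  | G7 (e f g) : GEq (.seq e (.seq f g)) (.seq (.seq e f) g)
  | G8 (b e f g) : GEq (.seq (.add b e f) g) (.add b (.seq e g) (.seq f g))
  | FP (b e f) : GEq (.loop b e f) (.add b (.seq e (.loop b e f)) f)
  | RSP {b e f g} : GEq g (.add b (.seq e g) f) → GEq g (.loop b e f)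

/-- An expression is dead when it is a dead state of the syntactic skip-free automaton. -/
def DeadE (e : GExp At Act) : Prop := Dead gderiv e

open scoped Classical in
/-- Syntactic pruning of skip-free GKAT expressions. -/
noncomputable def floorE : GExp At Act → GExp At Act
  | .zero => .zero
  | .act p => .act p
  | .add b e f => .add b (floorE e) (floorE f)
  | .seq e f => if DeadE f then .zero else .seq (floorE e) (floorE f)
  | .loop b e f =>
      if DeadE (.add (fun α => !b α) f .zero) then .zero
      else .loop b (floorE e) (floorE f)

/-! A dead expression `e` is provably `0`. One proves more generally, by induction on `e`, that
`e +_c 0 ≡ 0` whenever every derivative of `e` at an atom satisfying `c` fails or leads to a dead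
state. Guards split along `+_b`; a sequence `e₁·e₂` either has a dead tail, and `x·0 = 0` applies,
or its derivatives can only reach dead states inside `e₁`, so that `e₁ +_c 0 ≡ 0` and
`(e₁·e₂) +_c 0 ≡ (e₁ +_c 0)·e₂ ≡ 0`; a loop is unfolded by the fixed-point axiom and, when it is
dead itself, collapses to `0` by the unique-solution axiom. Pruning only replaces by `0` a
sequence with a dead tail or a loop with a dead exit, which are `≡ 0` by the same two axioms. -/

local infix:50 " ≡ " => GEq

instance : Trans (GEq : GExp At Act → GExp At Act → Prop) GEq GEq := ⟨GEq.trans⟩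

namespace GEq

open GExp

variable {b c : At → Bool} {e f : GExp At Act}

theorem add_congr_guard (h : ∀ α, b α = c α) : add b e f ≡ add c e f :=
  funext h ▸ refl _

theorem add_false_left : add (fun _ => false) e f ≡ f :=
  (G2 _ e f).trans (G0 f e)

theorem add_add_self_left (c : At → Bool) (e f g : GExp At Act) :
    add c e f ≡ add c (add c e g) f :=
  calc add c e f
    _ ≡ add (fun α => c α || !c α) (add c e f) g := ((G0 _ g).symm.trans
        (add_congr_guard fun α => by cases c α <;> rfl))
    _ ≡ add c e (add (fun α => !c α) f g) := (G3 c _ e f g).symm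
    _ ≡ add c e (add c g f) := congAdd c (refl e) (G2 c g f).symm
    _ ≡ add (fun α => c α || c α) (add c e g) f := G3 c c e g f
    _ ≡ add c (add c e g) f := add_congr_guard fun α => Bool.or_self _

theorem add_add_decomp (c b : At → Bool) (e f : GExp At Act) :
    add c (add b e f) zero ≡ add (fun α => c α && b α) e (add (fun α => c α && !b α) f zero) :=
  calc add c (add b e f) zero
    _ ≡ add (fun α => !c α) zero (add b e f) := G2 c _ _
    _ ≡ add (fun α => !c α || b α) (add (fun α => !c α) zero e) f := G3 _ b zero e f
    _ ≡ add (fun α => !(!c α || b α)) f (add (fun α => !c α) zero e) := G2 _ _ _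
    _ ≡ add (fun α => !(!c α || b α) || !c α) (add (fun α => !(!c α || b α)) f zero) e :=
        G3 _ _ f zero e
    _ = add (fun α => !(c α && b α)) (add (fun α => c α && !b α) f zero) e := by
        congr 2 <;> funext α <;> cases c α <;> cases b α <;> rfl
    _ ≡ add (fun α => c α && b α) e (add (fun α => c α && !b α) f zero) := (G2 _ _ _).symm

theorem seq_add_zero (c : At → Bool) (e g : GExp At Act) :
    seq (add c e zero) g ≡ add c (seq e g) zero :=
  (G8 c e zero g).trans (congAdd c (refl _) (G6 g))

theorem add_zero_of_left (c : At → Bool) (h : e ≡ zero) : add c e zero ≡ zero :=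
  (congAdd c h (refl _)).trans (G1 c zero)

theorem seq_zero_of_right (e : GExp At Act) (h : f ≡ zero) : seq e f ≡ zero :=
  (congSeq (refl e) h).trans (dagger e)

theorem loop_zero_right (b : At → Bool) (e : GExp At Act) : loop b e zero ≡ zero :=
  (RSP ((G1 b zero).symm.trans (congAdd b (dagger e).symm (refl _)))).symm

theorem loop_zero_of_exit (h : add (fun α => !b α) f zero ≡ zero) : loop b e f ≡ zero := by
  have unfold_dead_exit :=
    calc loop b e f
      _ ≡ add b (seq e (loop b e f)) f := FP b e f
      _ ≡ add (fun α => !b α) f (seq e (loop b e f)) := G2 _ _ _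
      _ ≡ add (fun α => !b α) (add (fun α => !b α) f zero) (seq e (loop b e f)) :=
          add_add_self_left _ _ _ _
      _ ≡ add (fun α => !b α) zero (seq e (loop b e f)) := congAdd _ h (refl _)
      _ ≡ add (fun α => !!b α) (seq e (loop b e f)) zero := G2 _ _ _
      _ ≡ add b (seq e (loop b e f)) zero := add_congr_guard fun α => Bool.not_not _
  exact (RSP unfold_dead_exit).trans (loop_zero_right b e)

end GEq

def DeadAt (h : SFA At Act X) (x : X) (α : At) : Prop :=
  h x α = none ∨ ∃ (p : Act) (x' : X), h x α = some (p, some x') ∧ Dead h x'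

theorem Dead.deadAt {h : SFA At Act X} {x : X} (hx : Dead h x) (α : At) : DeadAt h x α := by
  obtain ⟨D, hxD, hD⟩ := hx
  exact (hD x hxD α).imp_right fun ⟨p, x', hstep, hx'⟩ => ⟨p, x', hstep, D, hx', hD⟩

section Syntactic

open GExp

variable {b : At → Bool} {e f x y : GExp At Act} {α : At}

theorem gderiv_add : gderiv (add b e f) α = gderiv (if b α then e else f) α := by
  rw [gderiv, apply_ite (gderiv · α)]

theorem gderiv_loop : gderiv (loop b e f) α = gderiv (add b (seq e (loop b e f)) f) α := by
  simp only [gderiv]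

theorem gderiv_of_deadAt_seq (hy : ¬DeadE y) (h : DeadAt gderiv (seq x y) α) :
    gderiv x α = none ∨ ∃ p x', gderiv x α = some (p, some x') ∧ DeadE (seq x' y) := by
  rcases hx : gderiv x α with _ | ⟨p, _ | x'⟩
  · exact Or.inl rfl
  · exact absurd (by simpa [DeadAt, DeadE, gderiv, hx] using h) hy
  · exact Or.inr ⟨p, x', rfl, by simpa [DeadAt, DeadE, gderiv, hx] using h⟩

theorem DeadE.of_seq (hxy : DeadE (seq x y)) (hy : ¬DeadE y) : DeadE x :=
  ⟨{x | DeadE (seq x y)}, hxy, fun _ hz α => gderiv_of_deadAt_seq hy (Dead.deadAt hz α)⟩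

theorem deadAt_of_deadAt_seq (hy : ¬DeadE y) (h : DeadAt gderiv (seq x y) α) :
    DeadAt gderiv x α :=
  (gderiv_of_deadAt_seq hy h).imp_right fun ⟨p, x', hstep, hx'⟩ => ⟨p, x', hstep, hx'.of_seq hy⟩

end Syntactic

section Collapse

open GExp

variable {b c : At → Bool} {e f : GExp At Act}

theorem add_add_zero_of_deadAt
    (ihe : ∀ c, (∀ α, c α = true → DeadAt gderiv e α) → add c e zero ≡ zero)
    (ihf : ∀ c, (∀ α, c α = true → DeadAt gderiv f α) → add c f zero ≡ zero)
    (hc : ∀ α, c α = true → DeadAt gderiv (add b e f) α) : add c (add b e f) zero ≡ zero := by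
  refine (GEq.add_add_decomp c b e f).trans
    ((GEq.congAdd _ (GEq.refl e) (ihf _ fun α hα => ?_)).trans (ihe _ fun α hα => ?_))
  all_goals
    simp only [Bool.and_eq_true, Bool.not_eq_true'] at hα
    simpa [DeadAt, gderiv_add, hα.2] using hc α hα.1

theorem add_seq_zero_of_deadAt
    (ihe : ∀ c, (∀ α, c α = true → DeadAt gderiv e α) → add c e zero ≡ zero)
    (hf : ¬DeadE f) (hc : ∀ α, c α = true → DeadAt gderiv (seq e f) α) :
    add c (seq e f) zero ≡ zero :=
  calc add c (seq e f) zero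
    _ ≡ seq (add c e zero) f := (GEq.seq_add_zero c e f).symm
    _ ≡ seq zero f := GEq.congSeq (ihe c fun α hα => deadAt_of_deadAt_seq hf (hc α hα)) (.refl f)
    _ ≡ zero := GEq.G6 f

theorem add_zero_of_deadAt (e : GExp At Act) :
    ∀ c : At → Bool, (∀ α, c α = true → DeadAt gderiv e α) → add c e zero ≡ zero := by
  induction e with
  | zero => exact fun c _ => GEq.G1 c zero
  | act p =>
    intro c hc
    have hc_false : c = fun _ => false := funext fun α => by
      by_contra hα
      simpa [DeadAt, gderiv] using hc α (by simpa using hα)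
    exact hc_false ▸ GEq.add_false_left
  | add b e f ihe ihf => exact fun c => add_add_zero_of_deadAt ihe ihf
  | seq e f ihe ihf =>
    intro c hc
    by_cases hf : DeadE f
    · exact GEq.add_zero_of_left c (GEq.seq_zero_of_right e
        ((GEq.G0 f zero).symm.trans (ihf _ fun α _ => hf.deadAt α)))
    · exact add_seq_zero_of_deadAt ihe hf hc
  | loop b e f ihe ihf =>
    intro c hc
    by_cases hL : DeadE (loop b e f)
    · refine GEq.add_zero_of_left c (GEq.loop_zero_of_exit (ihf _ fun α hα => ?_))
      simp only [Bool.not_eq_true'] at hα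
      simpa [DeadAt, gderiv_loop, gderiv_add, hα] using hL.deadAt α
    · calc add c (loop b e f) zero
        _ ≡ add c (add b (seq e (loop b e f)) f) zero := GEq.congAdd c (GEq.FP b e f) (.refl _)
        _ ≡ zero := add_add_zero_of_deadAt (fun _ => add_seq_zero_of_deadAt ihe hL) ihf
            fun α hα => by unfold DeadAt; rw [← gderiv_loop]; exact hc α hα

theorem geq_zero_of_deadE (he : DeadE e) : e ≡ zero :=
  (GEq.G0 e zero).symm.trans (add_zero_of_deadAt e _ fun α _ => he.deadAt α)

end Collapse

/-- every skip-free GKAT expression is provably equal (using the full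
axioms, including `x·0 = 0`) to its pruning `⌊e⌋`. -/
theorem floor_preserves_equiv (e : GExp At Act) : GEq e (floorE e) := by
  induction e with
  | zero | act _ => exact .refl _
  | add b e f ihe ihf => exact .congAdd b ihe ihf
  | seq e f ihe ihf =>
    rw [floorE]
    split_ifs with hf
    · exact GEq.seq_zero_of_right e (geq_zero_of_deadE hf)
    · exact .congSeq ihe ihf
  | loop b e f ihe ihf =>
    rw [floorE]
    split_ifs with hexit
    · exact GEq.loop_zero_of_exit (geq_zero_of_deadE hexit)
    · exact .congLoop b ihe ihf
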